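/- arXiv:1207.5259 — 4 statements merged into one kernel-verified Lean document; each statement's English description precedes it below -/
import Mathlib

section
/- Let $\Omega$ be a countable set, $A \subseteq \Omega$, and let $X_1,\dots,X_n$ be i.i.d. random variables with distribution $P$ on $\Omega$. Let $R_n = \sum_{x\in A} P(x)\,\mathbb{1}\{\forall m\le n,\ X_m \neq x\}$ be the missing mass of $A$ and $U_n = \sum_{x\in A}\mathbb{1}\{x \text{ appears exactly once among } X_1,\dots,X_n\}$, with Good-Turing estimator $\hat R_n = U_n/n$. Then $-1/n \le \mathbb{E}[R_n] - \mathbb{E}[\hat R_n] \le 0$. -/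
/-!
Both expectations are computed species by species. With `p x = P {x}`, the species `x` is missing
from the sample with probability `(1 - p x) ^ n` and seen exactly once with probability
`n p x (1 - p x) ^ (n - 1)`, so `𝔼[Rₙ] - 𝔼[R̂ₙ] = -∑_{x ∈ A} p x ^ 2 (1 - p x) ^ (n - 1) ≤ 0`.
As `n p x (1 - p x) ^ (n - 1)` is a term of the binomial expansion of `(p x + (1 - p x)) ^ n = 1`,
the term of `x` is at most `p x / n`, and `∑_{x ∈ A} p x ≤ 1` gives the lower bound `-1 / n`.
-/

open scoped Classical

open MeasureTheory ProbabilityTheory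

lemma Fintype.prod_ite_eq_mul_pow {ι M : Type*} [Fintype ι] [DecidableEq ι] [CommMonoid M]
    (i : ι) (a b : M) :
    ∏ j, (if j = i then a else b) = a * b ^ (Fintype.card ι - 1) := by
  rw [Fintype.prod_eq_mul_prod_compl i, if_pos rfl,
    Finset.prod_congr rfl fun j hj => if_neg (by simpa using hj)]
  simp [Finset.card_compl]

lemma Summable.mul_one_sub_pow {ι : Type*} {p : ι → ℝ} (hp : Summable p) (h0 : ∀ i, 0 ≤ p i)
    (h1 : ∀ i, p i ≤ 1) (k : ℕ) : Summable fun i => p i * (1 - p i) ^ k :=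
  Summable.of_nonneg_of_le (fun i => mul_nonneg (h0 i) (pow_nonneg (sub_nonneg.2 (h1 i)) k))
    (fun i => mul_le_of_le_one_right (h0 i)
      (pow_le_one₀ (sub_nonneg.2 (h1 i)) (sub_le_self 1 (h0 i)))) hp

lemma natCast_add_one_mul_mul_one_sub_pow_le_one {p : ℝ} (h0 : 0 ≤ p) (h1 : p ≤ 1) (k : ℕ) :
    (k + 1 : ℝ) * (p * (1 - p) ^ k) ≤ 1 := by
  have hq : 0 ≤ 1 - p := sub_nonneg.2 h1
  calc (k + 1 : ℝ) * (p * (1 - p) ^ k) = p ^ 1 * (1 - p) ^ (k + 1 - 1) * (k + 1).choose 1 := by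
        rw [pow_one, Nat.add_sub_cancel, Nat.choose_one_right]; push_cast; ring
    _ ≤ ∑ m ∈ Finset.range (k + 2), p ^ m * (1 - p) ^ (k + 1 - m) * (k + 1).choose m :=
        Finset.single_le_sum (f := fun m => p ^ m * (1 - p) ^ (k + 1 - m) * (k + 1).choose m)
          (fun m _ => by positivity) (by simp)
    _ = 1 := by rw [← add_pow, add_sub_cancel, one_pow]

lemma tsum_mul_one_sub_pow_succ_sub_tsum_mem_Icc {ι : Type*} {p : ι → ℝ} (hp : Summable p)
    (h0 : ∀ i, 0 ≤ p i) (h1 : ∀ i, p i ≤ 1) (hsum : ∑' i, p i ≤ 1) (k : ℕ) :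
    ∑' i, p i * (1 - p i) ^ (k + 1) - ∑' i, p i * (1 - p i) ^ k ∈
      Set.Icc (-(1 / (k + 1 : ℝ))) 0 := by
  have hterm0 : ∀ i, 0 ≤ p i ^ 2 * (1 - p i) ^ k := fun i =>
    mul_nonneg (sq_nonneg _) (pow_nonneg (sub_nonneg.2 (h1 i)) k)
  have hterm1 : ∀ i, p i ^ 2 * (1 - p i) ^ k ≤ p i / (k + 1) := fun i => by
    rw [le_div_iff₀ (by positivity)]
    calc p i ^ 2 * (1 - p i) ^ k * (k + 1) = p i * ((k + 1) * (p i * (1 - p i) ^ k)) := by ring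
      _ ≤ p i := mul_le_of_le_one_right (h0 i)
        (natCast_add_one_mul_mul_one_sub_pow_le_one (h0 i) (h1 i) k)
  have hdiff : ∑' i, p i * (1 - p i) ^ (k + 1) - ∑' i, p i * (1 - p i) ^ k =
      -∑' i, p i ^ 2 * (1 - p i) ^ k := by
    rw [← (hp.mul_one_sub_pow h0 h1 _).tsum_sub (hp.mul_one_sub_pow h0 h1 _), ← tsum_neg]
    exact tsum_congr fun i => by ring
  rw [hdiff, Set.mem_Icc, neg_le_neg_iff, neg_nonpos]
  refine ⟨?_, tsum_nonneg hterm0⟩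
  calc ∑' i, p i ^ 2 * (1 - p i) ^ k ≤ ∑' i, p i / (k + 1) :=
        Summable.tsum_le_tsum hterm1 (.of_nonneg_of_le hterm0 hterm1 (hp.div_const _))
          (hp.div_const _)
    _ = (∑' i, p i) / (k + 1) := tsum_div_const
    _ ≤ 1 / (k + 1) := by gcongr

lemma Set.ncard_eq_tsum_indicator {α : Type*} {A S : Set α} (hSA : S ⊆ A) :
    (S.ncard : ℝ) = ∑' x : A, S.indicator (fun _ => (1 : ℝ)) x := by
  have hpre : ∀ x : A, S.indicator (fun _ => (1 : ℝ)) x =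
      (Subtype.val ⁻¹' S : Set A).indicator (fun _ => 1) x := fun x => by
    simp [Set.indicator_apply]
  rw [tsum_congr hpre, ← tsum_subtype, tsum_const, Nat.card_coe_set_eq,
    Set.ncard_preimage_of_injective_subset_range Subtype.val_injective (by simpa using hSA)]
  simp

namespace MeasureTheory

variable {α : Type*} [MeasurableSpace α]

lemma integral_tsum_indicator_const {ι F : Type*} [Countable ι] [NormedAddCommGroup F]
    [NormedSpace ℝ F] [CompleteSpace F] {μ : Measure α} [IsFiniteMeasure μ] {E : ι → Set α}
    (hE : ∀ i, MeasurableSet (E i)) {c : ι → F}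
    (hc : Summable fun i => μ.real (E i) * ‖c i‖) :
    ∫ a, ∑' i, (E i).indicator (fun _ => c i) a ∂μ = ∑' i, μ.real (E i) • c i := by
  rw [← integral_tsum_of_summable_integral_norm
    (fun i => (integrable_const (c i)).indicator (hE i))]
  · simp only [integral_indicator_const _ (hE _)]
  · simpa only [norm_indicator_eq_indicator_norm, integral_indicator_const _ (hE _),
      smul_eq_mul] using hc

variable [MeasurableSingletonClass α] (P : Measure α) [IsProbabilityMeasure P] (A : Set α)

lemma tsum_measure_singleton_le_one : ∑' x : A, P {(x : α)} ≤ 1 :=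
  (tsum_meas_le_meas_iUnion_of_disjoint P (fun _ => measurableSet_singleton _)
    fun _ _ h => Set.disjoint_singleton.2 (Subtype.coe_injective.ne h)).trans prob_le_one

lemma summable_measureReal_singleton : Summable fun x : A => P.real {(x : α)} :=
  ENNReal.summable_toReal (ne_top_of_le_ne_top ENNReal.one_ne_top
    (tsum_measure_singleton_le_one P A))

lemma tsum_measureReal_singleton_le_one : ∑' x : A, P.real {(x : α)} ≤ 1 := by
  simpa [measureReal_def, ENNReal.tsum_toReal_eq (fun _ => measure_ne_top P _)] using
    ENNReal.toReal_mono ENNReal.one_ne_top (tsum_measure_singleton_le_one P A)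

end MeasureTheory

namespace ProbabilityTheory

section IIDSample

variable {Ω Θ ι : Type*} [MeasurableSpace Ω] [MeasurableSpace Θ] [Fintype ι]
  {μ : Measure Θ} {P : Measure Ω} {X : ι → Θ → Ω}

lemma iIndepFun.measureReal_iInter_preimage_of_map_eq (hmeas : ∀ i, Measurable (X i))
    (hindep : iIndepFun X μ) (hlaw : ∀ i, μ.map (X i) = P) {S : ι → Set Ω}
    (hS : ∀ i, MeasurableSet (S i)) :
    μ.real (⋂ i, X i ⁻¹' S i) = ∏ i, P.real (S i) := by
  rw [measureReal_def, hindep.meas_iInter fun i => ⟨S i, hS i, rfl⟩, ENNReal.toReal_prod]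
  refine Finset.prod_congr rfl fun i _ => ?_
  rw [← hlaw i, map_measureReal_apply (hmeas i) (hS i), measureReal_def]

variable [MeasurableSingletonClass Ω] [IsProbabilityMeasure P]

lemma measureReal_forall_ne (hmeas : ∀ i, Measurable (X i)) (hindep : iIndepFun X μ)
    (hlaw : ∀ i, μ.map (X i) = P) (x : Ω) :
    μ.real {ω | ∀ i, X i ω ≠ x} = (1 - P.real {x}) ^ Fintype.card ι := by
  have hset : {ω | ∀ i, X i ω ≠ x} = ⋂ i, X i ⁻¹' {x}ᶜ := by ext; simp
  rw [hset, hindep.measureReal_iInter_preimage_of_map_eq hmeas hlaw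
      fun _ => (measurableSet_singleton x).compl,
    probReal_compl_eq_one_sub (measurableSet_singleton x), Finset.prod_const, Finset.card_univ]

lemma measureReal_existsUnique_eq [IsFiniteMeasure μ] (hmeas : ∀ i, Measurable (X i))
    (hindep : iIndepFun X μ) (hlaw : ∀ i, μ.map (X i) = P) (x : Ω) :
    μ.real {ω | ∃! i, X i ω = x} =
      Fintype.card ι * (P.real {x} * (1 - P.real {x}) ^ (Fintype.card ι - 1)) := by
  set E : ι → Set Θ := fun i => ⋂ j, X j ⁻¹' (if j = i then {x} else {x}ᶜ) with hE
  have hS : ∀ i j : ι, MeasurableSet (if j = i then {x} else ({x}ᶜ : Set Ω)) := fun i j => by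
    split_ifs
    exacts [measurableSet_singleton x, (measurableSet_singleton x).compl]
  have hset : {ω | ∃! i, X i ω = x} = ⋃ i, E i := by
    ext ω
    simp only [hE, Set.mem_ofPred_eq, Set.mem_iUnion, Set.mem_iInter, Set.mem_preimage]
    refine exists_congr fun i => ⟨fun h j => ?_, fun h => ⟨by simpa using h i, fun j hj => ?_⟩⟩
    · split_ifs with hji
      exacts [hji ▸ h.1, fun hj => hji (h.2 j hj)]
    · by_contra hji
      simpa [hji, hj] using h j
  have hdisj : Pairwise (Function.onFun Disjoint E) := fun i i' hii' =>
    Set.disjoint_left.2 fun ω hi hi' => by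
      simp only [hE, Set.mem_iInter, Set.mem_preimage] at hi hi'
      have hxi : X i ω = x := by simpa using hi i
      have hxi' : X i ω ≠ x := by simpa [hii'] using hi' i
      exact hxi' hxi
  have hEμ : ∀ i, μ.real (E i) = P.real {x} * (1 - P.real {x}) ^ (Fintype.card ι - 1) := by
    intro i
    rw [hindep.measureReal_iInter_preimage_of_map_eq hmeas hlaw (hS i)]
    simp only [apply_ite, probReal_compl_eq_one_sub (measurableSet_singleton x)]
    exact Fintype.prod_ite_eq_mul_pow i _ _
  rw [hset, measureReal_iUnion_fintype hdisj
    fun i => MeasurableSet.iInter fun j => hmeas j (hS i j)]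
  simp [hEμ]

end IIDSample

section GoodTuring

variable {Ω Θ ι : Type*} [Countable Ω] [MeasurableSpace Ω] [MeasurableSingletonClass Ω]
  [MeasurableSpace Θ] [Fintype ι] {A : Set Ω} {P : Measure Ω} [IsProbabilityMeasure P]
  {μ : Measure Θ} [IsFiniteMeasure μ] {X : ι → Θ → Ω}

lemma integral_missing_mass (hmeas : ∀ i, Measurable (X i)) (hindep : iIndepFun X μ)
    (hlaw : ∀ i, μ.map (X i) = P) :
    ∫ ω, ∑' x : A, P.real {(x : Ω)} * (if ∀ i, X i ω ≠ x then 1 else 0) ∂μ =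
      ∑' x : A, P.real {(x : Ω)} * (1 - P.real {(x : Ω)}) ^ Fintype.card ι := by
  have hmiss : ∀ x : Ω, μ.real {ω | ∀ i, X i ω ≠ x} * P.real {x} =
      P.real {x} * (1 - P.real {x}) ^ Fintype.card ι := fun x => by
    rw [measureReal_forall_ne hmeas hindep hlaw, mul_comm]
  calc _ = ∫ ω, ∑' x : A, {ω | ∀ i, X i ω ≠ x}.indicator (fun _ => P.real {(x : Ω)}) ω ∂μ := by
        simp [Set.indicator_apply]
    _ = _ := by
      rw [integral_tsum_indicator_const (fun x => measurableSet_setOfPred.2 (by fun_prop)) ?_]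
      · exact tsum_congr fun x => hmiss x
      simpa only [Real.norm_of_nonneg measureReal_nonneg, hmiss] using
        (summable_measureReal_singleton P A).mul_one_sub_pow
          (fun _ => measureReal_nonneg) (fun _ => measureReal_le_one) _

lemma integral_ncard_existsUnique_eq (hmeas : ∀ i, Measurable (X i)) (hindep : iIndepFun X μ)
    (hlaw : ∀ i, μ.map (X i) = P) :
    ∫ ω, ({a ∈ A | ∃! i, X i ω = a}.ncard : ℝ) ∂μ = ∑' x : A,
      Fintype.card ι * (P.real {(x : Ω)} * (1 - P.real {(x : Ω)}) ^ (Fintype.card ι - 1)) := by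
  have hsum : Summable fun x : A =>
      Fintype.card ι * (P.real {(x : Ω)} * (1 - P.real {(x : Ω)}) ^ (Fintype.card ι - 1)) :=
    ((summable_measureReal_singleton P A).mul_one_sub_pow
      (fun _ => measureReal_nonneg) (fun _ => measureReal_le_one) _).mul_left _
  calc _ = ∫ ω, ∑' x : A, {ω | ∃! i, X i ω = x}.indicator (fun _ => (1 : ℝ)) ω ∂μ := by
        refine integral_congr_ae (Filter.Eventually.of_forall fun ω => ?_)
        dsimp only
        rw [Set.ncard_eq_tsum_indicator (Set.sep_subset _ _)]
        exact tsum_congr fun x => by simp [Set.indicator_apply, x.2]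
    _ = _ := by
      rw [integral_tsum_indicator_const (fun x => measurableSet_setOfPred.2 (by fun_prop))]
      · simp [measureReal_existsUnique_eq hmeas hindep hlaw]
      simpa [measureReal_existsUnique_eq hmeas hindep hlaw] using hsum

end GoodTuring

end ProbabilityTheory

/-- Good-Turing bias bound: with `X₁,…,Xₙ` i.i.d. with law `P` on a countable set `Ω`,
`Rₙ = ∑_{x∈A} P(x) 𝟙{∀m, Xₘ ≠ x}` the missing mass of `A ⊆ Ω`, and
`R̂ₙ = (1/n)·#{x ∈ A seen exactly once}` the Good-Turing estimator, one has
`-1/n ≤ 𝔼[Rₙ] - 𝔼[R̂ₙ] ≤ 0`. -/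
theorem stmt_0 {Ω : Type*} [Countable Ω] [MeasurableSpace Ω] [MeasurableSingletonClass Ω]
    (A : Set Ω) (P : Measure Ω) [IsProbabilityMeasure P]
    {Θ : Type*} [MeasurableSpace Θ] (μ : Measure Θ) [IsProbabilityMeasure μ]
    (n : ℕ) (hn : 1 ≤ n) (X : Fin n → Θ → Ω) (hmeas : ∀ m, Measurable (X m))
    (hindep : iIndepFun X μ)
    (hlaw : ∀ m, Measure.map (X m) μ = P)
    (R Rhat : Θ → ℝ)
    (hR : ∀ ω, R ω =
      ∑' x : A, (P {(x : Ω)}).toReal * (if ∀ m : Fin n, X m ω ≠ x then 1 else 0))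
    (hRhat : ∀ ω, Rhat ω = (Set.ncard {a ∈ A | ∃! m : Fin n, X m ω = a}) / n) :
    -(1 / (n : ℝ)) ≤ (∫ ω, R ω ∂μ) - ∫ ω, Rhat ω ∂μ ∧
      (∫ ω, R ω ∂μ) - ∫ ω, Rhat ω ∂μ ≤ 0 := by
  obtain ⟨k, rfl⟩ : ∃ k, n = k + 1 := ⟨n - 1, by omega⟩
  have hER : ∫ ω, R ω ∂μ = ∑' x : A, P.real {(x : Ω)} * (1 - P.real {(x : Ω)}) ^ (k + 1) := by
    rw [integral_congr_ae (.of_forall hR)]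
    -- the two `if`s carry different `Decidable` instances
    convert integral_missing_mass hmeas hindep hlaw using 1
    · congr!
    · simp
  have hERhat : ∫ ω, Rhat ω ∂μ = ∑' x : A, P.real {(x : Ω)} * (1 - P.real {(x : Ω)}) ^ k := by
    simp_rw [hRhat, integral_div, integral_ncard_existsUnique_eq hmeas hindep hlaw,
      ← tsum_div_const, Fintype.card_fin, add_tsub_cancel_right, Nat.cast_succ]
    exact tsum_congr fun x => mul_div_cancel_left₀ _ (by positivity : (k + 1 : ℝ) ≠ 0)
  rw [hER, hERhat, Nat.cast_succ]
  exact tsum_mul_one_sub_pow_succ_sub_tsum_mem_Icc (summable_measureReal_singleton P A)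
    (fun _ => measureReal_nonneg) (fun _ => measureReal_le_one)
    (tsum_measureReal_singleton_le_one P A) k
end

section
/- Under assumption (i) (non-intersecting supports of the experts on $A$), for any policy $\pi$ and any horizon $t\ge 1$, the expected number of interesting items found satisfies $\mathbb{E}F^{\pi}(t) \le \mathbb{E}F^{*}(t)$, where $F^*$ is the number of items found by the greedy oracle closed-loop policy that at each step requests the expert with the largest remaining probability mass of undiscovered interesting items. -/
open scoped Classical

open MeasureTheory ProbabilityTheory

noncomputable section

/-- Number of requests made to expert `i` in the history `h` (a list of
(expert, observed item) pairs). -/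
def pulls {K : ℕ} {X : Type*} (h : List (Fin K × X)) (i : Fin K) : ℕ :=
  (h.filter (fun p => p.1 = i)).length

/-- Trajectory of a (deterministic, history-dependent) policy `π` when expert `i`'s
successive draws are `samp i 0, samp i 1, …`: at each step the policy picks an expert
as a function of the past history, and observes that expert's next sample. -/
def traj {K : ℕ} {X : Type*} (π : List (Fin K × X) → Fin K)
    (samp : Fin K → ℕ → X) : ℕ → List (Fin K × X)
  | 0 => []
  | t + 1 =>
    let h := traj π samp t
    h ++ [(π h, samp (π h) (pulls h (π h)))]

/-- Number of interesting items (elements of `A`) discovered in the history `h`. -/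
def found {K : ℕ} {X : Type*} (A : Set X) (h : List (Fin K × X)) : ℕ :=
  (A ∩ {x | ∃ p ∈ h, p.2 = x}).ncard

/-- Missing mass of interesting items of expert `i` given the history `h`:
the `P i`-probability of the not-yet-discovered elements of `A`. -/
def missingMass {K : ℕ} {X : Type*} (P : Fin K → PMF X) (A : Set X)
    (h : List (Fin K × X)) (i : Fin K) : ℝ :=
  ∑' x : ↥(A \ {x | ∃ p ∈ h, p.2 = x}), (P i ↑x).toReal

/-!
The expected number of items a policy finds satisfies a one-step recursion over histories,
because the next sample of the requested expert is independent of all samples drawn so far and has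
law `P i`; so it suffices to compare the resulting value functions. Every policy is dominated by
the Bellman optimum, and the greedy policy attains it by an exchange argument. With supports
disjoint on `A`, requesting another expert `j` leaves the missing mass of a greedy expert `i`
unchanged, so `i` remains greedy; and requesting `j` then `i` produces the same observed set, with
the same law, as `i` then `j`. Hence postponing `j` until after `i` never hurts, and induction on
the horizon shows that the greedy policy is optimal.
-/

open scoped ENNReal

namespace OCL

variable {K : ℕ} {α : Type*}

def observed (h : List (Fin K × α)) : Set α := {x | ∃ p ∈ h, p.2 = x}

lemma observed_append_singleton (h : List (Fin K × α)) (e : Fin K × α) :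
    observed (h ++ [e]) = insert e.2 (observed h) := by
  ext x
  simp only [observed, List.mem_append, List.mem_singleton, Set.mem_ofPred_eq, Set.mem_insert_iff]
  grind

lemma observed_finite (h : List (Fin K × α)) : (observed h).Finite :=
  (h.finite_toSet.image Prod.snd).subset fun _ ⟨p, hp, hx⟩ => ⟨p, hp, hx⟩

lemma found_append_singleton (A : Set α) (h : List (Fin K × α)) (e : Fin K × α) :
    found A (h ++ [e]) = found A h + if e.2 ∈ A \ observed h then 1 else 0 := by
  change (A ∩ observed (h ++ [e])).ncard = (A ∩ observed h).ncard + _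
  rw [observed_append_singleton]
  split_ifs with he
  · rw [Set.inter_insert_of_mem he.1, Set.ncard_insert_of_notMem (fun hx => he.2 hx.2)
      ((observed_finite h).inter_of_right A)]
  · by_cases hA : e.2 ∈ A
    · rw [Set.insert_eq_of_mem (not_not.1 fun ho => he ⟨hA, ho⟩), add_zero]
    · rw [Set.inter_insert_of_notMem hA, add_zero]

lemma found_append_singleton_le (A : Set α) (h : List (Fin K × α)) (e : Fin K × α) :
    found A (h ++ [e]) ≤ found A h + 1 := by
  rw [found_append_singleton]
  split_ifs <;> omega

lemma pulls_append_singleton (h : List (Fin K × α)) (e : Fin K × α) (j : Fin K) :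
    pulls (h ++ [e]) j = pulls h j + if e.1 = j then 1 else 0 := by
  by_cases hj : e.1 = j <;> simp [pulls, hj]

lemma pulls_le_pulls_append_singleton (h : List (Fin K × α)) (e : Fin K × α) (j : Fin K) :
    pulls h j ≤ pulls (h ++ [e]) j := by
  rw [pulls_append_singleton]
  omega

def extend (ρ : List (Fin K × α) → Fin K) (samp : Fin K → ℕ → α) (h : List (Fin K × α)) :
    List (Fin K × α) :=
  h ++ [(ρ h, samp (ρ h) (pulls h (ρ h)))]

lemma traj_eq_iterate_extend (ρ : List (Fin K × α) → Fin K) (samp : Fin K → ℕ → α) (t : ℕ) :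
    traj ρ samp t = (extend ρ samp)^[t] [] := by
  induction t with
  | zero => rfl
  | succ t ih => rw [Function.iterate_succ_apply', ← ih]; rfl

def emissingMass (P : Fin K → PMF α) (A : Set α) (h : List (Fin K × α)) (i : Fin K) : ℝ≥0∞ :=
  (P i).toOuterMeasure (A \ observed h)

variable {P : Fin K → PMF α} {A : Set α}

lemma emissingMass_ne_top (h : List (Fin K × α)) (i : Fin K) : emissingMass P A h i ≠ ⊤ := by
  rw [emissingMass, PMF.toOuterMeasure_apply]
  exact PMF.tsum_coe_indicator_ne_top _ _

lemma missingMass_eq_toReal (h : List (Fin K × α)) (i : Fin K) :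
    missingMass P A h i = (emissingMass P A h i).toReal := by
  rw [emissingMass, PMF.toOuterMeasure_apply, ← tsum_subtype,
    ENNReal.tsum_toReal_eq fun _ => PMF.apply_ne_top _ _]
  rfl

lemma emissingMass_append_singleton_of_ne
    (hdisj : ∀ i j : Fin K, i ≠ j → A ∩ (P i).support ∩ (P j).support = ∅)
    (h : List (Fin K × α)) {j m : Fin K} {x : α} (hx : x ∈ (P j).support) (hmj : m ≠ j) :
    emissingMass P A (h ++ [(j, x)]) m = emissingMass P A h m := by
  rw [emissingMass, emissingMass, ← PMF.toOuterMeasure_apply_inter_support,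
    ← PMF.toOuterMeasure_apply_inter_support (s := A \ observed h), observed_append_singleton]
  congr 1
  ext y
  simp only [Set.mem_inter_iff, Set.mem_sdiff, Set.mem_insert_iff, not_or]
  constructor
  · rintro ⟨⟨hA, -, ho⟩, hm⟩
    exact ⟨⟨hA, ho⟩, hm⟩
  · rintro ⟨⟨hA, ho⟩, hm⟩
    refine ⟨⟨hA, ?_, ho⟩, hm⟩
    rintro rfl
    exact (hdisj m j hmj).subset ⟨⟨hA, hm⟩, hx⟩

lemma tsum_mul_found_append_singleton (h : List (Fin K × α)) (i : Fin K) :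
    ∑' x, P i x * (found A (h ++ [(i, x)]) : ℝ≥0∞) = found A h + emissingMass P A h i := by
  simp only [found_append_singleton, Nat.cast_add, Nat.cast_ite, Nat.cast_one, Nat.cast_zero,
    mul_add, mul_ite, mul_one, mul_zero]
  rw [ENNReal.tsum_add, ENNReal.tsum_mul_right, PMF.tsum_coe, one_mul, emissingMass,
    PMF.toOuterMeasure_apply]
  simp only [Set.indicator_apply]

def IsGreedyAt (P : Fin K → PMF α) (A : Set α) (h : List (Fin K × α)) (i : Fin K) : Prop :=
  ∀ k, emissingMass P A h k ≤ emissingMass P A h i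

lemma IsGreedyAt.append_singleton_of_ne
    (hdisj : ∀ i j : Fin K, i ≠ j → A ∩ (P i).support ∩ (P j).support = ∅)
    {h : List (Fin K × α)} {i j : Fin K} (hi : IsGreedyAt P A h i) (hji : j ≠ i) {x : α}
    (hx : x ∈ (P j).support) : IsGreedyAt P A (h ++ [(j, x)]) i := by
  intro k
  rw [emissingMass_append_singleton_of_ne hdisj h hx hji.symm]
  by_cases hkj : k = j
  · subst hkj
    refine le_trans (measure_mono ?_) (hi k)
    rw [observed_append_singleton]
    exact Set.sdiff_subset_sdiff_right (Set.subset_insert _ _)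
  · rw [emissingMass_append_singleton_of_ne hdisj h hx hkj]
    exact hi k

section DynamicProgramming

variable (P : Fin K → PMF α) (g : List (Fin K × α) → ℝ≥0∞)

def optValue : ℕ → List (Fin K × α) → ℝ≥0∞
  | 0, h => g h
  | n + 1, h => ⨆ i, ∑' x, P i x * optValue n (h ++ [(i, x)])

def actionValue (n : ℕ) (h : List (Fin K × α)) (i : Fin K) : ℝ≥0∞ :=
  ∑' x, P i x * optValue P g n (h ++ [(i, x)])

def policyValue (ρ : List (Fin K × α) → Fin K) : ℕ → List (Fin K × α) → ℝ≥0∞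
  | 0, h => g h
  | n + 1, h => ∑' x, P (ρ h) x * policyValue ρ n (h ++ [(ρ h, x)])

variable {P g}

lemma policyValue_le_optValue (ρ : List (Fin K × α) → Fin K) (n : ℕ) (h : List (Fin K × α)) :
    policyValue P g ρ n h ≤ optValue P g n h := by
  induction n generalizing h with
  | zero => rfl
  | succ n ih =>
    calc policyValue P g ρ (n + 1) h
        ≤ actionValue P g n h (ρ h) := ENNReal.tsum_le_tsum fun x => mul_le_mul_right (ih _) _
      _ ≤ optValue P g (n + 1) h := le_iSup (actionValue P g n h) (ρ h)

lemma optValue_congr_of_observed_eq (hg : ∀ h h', observed h = observed h' → g h = g h')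
    (n : ℕ) {h h' : List (Fin K × α)} (hhh' : observed h = observed h') :
    optValue P g n h = optValue P g n h' := by
  induction n generalizing h h' with
  | zero => exact hg h h' hhh'
  | succ n ih =>
    refine iSup_congr fun i => tsum_congr fun x => congrArg _ (ih ?_)
    rw [observed_append_singleton, observed_append_singleton, hhh']

lemma tsum_mul_actionValue_comm (hg : ∀ h h', observed h = observed h' → g h = g h')
    (n : ℕ) (h : List (Fin K × α)) (i j : Fin K) :
    ∑' x, P j x * actionValue P g n (h ++ [(j, x)]) i =
      ∑' y, P i y * actionValue P g n (h ++ [(i, y)]) j := by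
  simp only [actionValue, ← ENNReal.tsum_mul_left]
  rw [ENNReal.tsum_comm]
  refine tsum_congr fun y => tsum_congr fun x => ?_
  rw [optValue_congr_of_observed_eq hg n (h' := h ++ [(i, y)] ++ [(j, x)])]
  · ring
  · simp only [observed_append_singleton, Set.insert_comm]

end DynamicProgramming

section Greedy

variable {P : Fin K → PMF α} {A : Set α}

lemma natCast_found_congr_of_observed_eq (h h' : List (Fin K × α))
    (hhh' : observed h = observed h') :
    (found A h : ℝ≥0∞) = found A h' :=
  congrArg (fun s => ((A ∩ s).ncard : ℝ≥0∞)) hhh'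

lemma policyValue_found_le (ρ : List (Fin K × α) → Fin K) (n : ℕ) (h : List (Fin K × α)) :
    policyValue P (fun h => found A h) ρ n h ≤ found A h + n := by
  induction n generalizing h with
  | zero => simp [policyValue]
  | succ n ih =>
    calc policyValue P (fun h => found A h) ρ (n + 1) h
        ≤ ∑' x, P (ρ h) x * ((found A h : ℝ≥0∞) + (n + 1)) := by
          refine ENNReal.tsum_le_tsum fun x => mul_le_mul_right ((ih _).trans ?_) _
          have hle : (found A (h ++ [(ρ h, x)]) : ℝ≥0∞) ≤ found A h + 1 := by
            exact_mod_cast found_append_singleton_le A h _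
          calc _ ≤ (found A h : ℝ≥0∞) + 1 + n := add_le_add hle le_rfl
            _ = _ := by ring
      _ = found A h + (n + 1 : ℕ) := by rw [ENNReal.tsum_mul_right, PMF.tsum_coe, one_mul]; simp

lemma actionValue_found_le_of_isGreedyAt
    (hdisj : ∀ i j : Fin K, i ≠ j → A ∩ (P i).support ∩ (P j).support = ∅)
    (n : ℕ) {h : List (Fin K × α)} {i : Fin K} (hi : IsGreedyAt P A h i) (j : Fin K) :
    actionValue P (fun h => found A h) n h j ≤ actionValue P (fun h => found A h) n h i := by
  induction n generalizing h j with
  | zero =>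
    simp only [actionValue, optValue, tsum_mul_found_append_singleton]
    exact add_le_add le_rfl (hi j)
  | succ n ih =>
    rcases eq_or_ne j i with rfl | hji
    · rfl
    have hopt : ∀ x ∈ (P j).support, optValue P (fun h => found A h) (n + 1) (h ++ [(j, x)]) =
        actionValue P (fun h => found A h) n (h ++ [(j, x)]) i := fun x hx =>
      le_antisymm (iSup_le (ih (hi.append_singleton_of_ne hdisj hji hx))) (le_iSup _ i)
    calc actionValue P (fun h => found A h) (n + 1) h j
        = ∑' x, P j x * actionValue P (fun h => found A h) n (h ++ [(j, x)]) i := by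
          refine tsum_congr fun x => ?_
          by_cases hx : x ∈ (P j).support
          · rw [hopt x hx]
          · rw [(PMF.apply_eq_zero_iff _ _).mpr hx, zero_mul, zero_mul]
      _ = ∑' y, P i y * actionValue P (fun h => found A h) n (h ++ [(i, y)]) j :=
          tsum_mul_actionValue_comm natCast_found_congr_of_observed_eq n h i j
      _ ≤ actionValue P (fun h => found A h) (n + 1) h i :=
          ENNReal.tsum_le_tsum fun y => mul_le_mul_right (le_iSup (actionValue P _ n _) j) _

lemma optValue_found_le_policyValue
    (hdisj : ∀ i j : Fin K, i ≠ j → A ∩ (P i).support ∩ (P j).support = ∅)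
    {ρ : List (Fin K × α) → Fin K} (hρ : ∀ h, IsGreedyAt P A h (ρ h)) (n : ℕ)
    (h : List (Fin K × α)) :
    optValue P (fun h => found A h) n h ≤ policyValue P (fun h => found A h) ρ n h := by
  induction n generalizing h with
  | zero => rfl
  | succ n ih =>
    calc optValue P (fun h => found A h) (n + 1) h
        ≤ actionValue P (fun h => found A h) n h (ρ h) :=
          iSup_le (actionValue_found_le_of_isGreedyAt hdisj n (hρ h))
      _ ≤ policyValue P (fun h => found A h) ρ (n + 1) h :=
          ENNReal.tsum_le_tsum fun x => mul_le_mul_right (ih _) _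

lemma policyValue_found_le_of_isGreedyAt
    (hdisj : ∀ i j : Fin K, i ≠ j → A ∩ (P i).support ∩ (P j).support = ∅)
    {ρ : List (Fin K × α) → Fin K} (hρ : ∀ h, IsGreedyAt P A h (ρ h))
    (π : List (Fin K × α) → Fin K) (n : ℕ) (h : List (Fin K × α)) :
    policyValue P (fun h => found A h) π n h ≤ policyValue P (fun h => found A h) ρ n h :=
  (policyValue_le_optValue π n h).trans (optValue_found_le_policyValue hdisj hρ n h)

end Greedy

section Probability

variable {Θ : Type*} {X : Fin K × ℕ → Θ → α}

def histEvent (ρ : List (Fin K × α) → Fin K) (X : Fin K × ℕ → Θ → α) (h₀ : List (Fin K × α))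
    (n : ℕ) (h : List (Fin K × α)) : Set Θ :=
  {ω | (extend ρ (fun i m => X (i, m) ω))^[n] h₀ = h}

lemma histEvent_succ (ρ : List (Fin K × α) → Fin K) (h₀ : List (Fin K × α)) (n : ℕ)
    (h : List (Fin K × α)) :
    histEvent ρ X h₀ (n + 1) h =
      ⋃ y, X (ρ h₀, pulls h₀ (ρ h₀)) ⁻¹' {y} ∩ histEvent ρ X (h₀ ++ [(ρ h₀, y)]) n h := by
  ext ω
  simp [histEvent, extend]

lemma comp_iterate_extend_eq_tsum_indicator (g : List (Fin K × α) → ℝ≥0∞)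
    (ρ : List (Fin K × α) → Fin K) (n : ℕ) (h₀ : List (Fin K × α)) (ω : Θ) :
    g ((extend ρ (fun i m => X (i, m) ω))^[n] h₀) =
      ∑' h, (histEvent ρ X h₀ n h).indicator (fun _ => g h) ω := by
  rw [tsum_eq_single ((extend ρ (fun i m => X (i, m) ω))^[n] h₀)]
  · exact (Set.indicator_of_mem rfl _).symm
  · exact fun h hne => Set.indicator_of_notMem (Ne.symm hne) _

abbrev undrawnSigma [MeasurableSpace α] (X : Fin K × ℕ → Θ → α) (h₀ : List (Fin K × α)) :
    MeasurableSpace Θ :=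
  ⨆ p ∈ {p : Fin K × ℕ | pulls h₀ p.1 ≤ p.2}, MeasurableSpace.comap (X p) inferInstance

variable [MeasurableSpace α]

lemma undrawnSigma_append_singleton_le (h₀ : List (Fin K × α)) (e : Fin K × α) :
    undrawnSigma X (h₀ ++ [e]) ≤ undrawnSigma X h₀ :=
  biSup_mono fun p hp => (pulls_le_pulls_append_singleton h₀ e p.1).trans hp

lemma measurableSet_histEvent [MeasurableSingletonClass α] [Countable α]
    (ρ : List (Fin K × α) → Fin K) (n : ℕ) (h₀ h : List (Fin K × α)) :
    MeasurableSet[undrawnSigma X h₀] (histEvent ρ X h₀ n h) := by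
  induction n generalizing h₀ with
  | zero => exact MeasurableSet.const (h₀ = h)
  | succ n ih =>
    rw [histEvent_succ]
    refine MeasurableSet.iUnion fun y => MeasurableSet.inter ?_
      (undrawnSigma_append_singleton_le h₀ _ _ (ih _))
    exact le_iSup₂ (f := fun p (_ : p ∈ {p : Fin K × ℕ | pulls h₀ p.1 ≤ p.2}) =>
      MeasurableSpace.comap (X p) inferInstance) (ρ h₀, pulls h₀ (ρ h₀))
      (le_refl (pulls h₀ (ρ h₀))) _ ⟨{y}, measurableSet_singleton y, rfl⟩

variable [MeasurableSpace Θ]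

lemma undrawnSigma_le (hmeas : ∀ p, Measurable (X p)) (h₀ : List (Fin K × α)) :
    undrawnSigma X h₀ ≤ ‹MeasurableSpace Θ› :=
  iSup₂_le fun p _ => (hmeas p).comap_le

variable [MeasurableSingletonClass α] {μ : Measure Θ} {P : Fin K → PMF α}

lemma measure_preimage_singleton (hmeas : ∀ p, Measurable (X p))
    (hlaw : ∀ p : Fin K × ℕ, Measure.map (X p) μ = (P p.1).toMeasure) (p : Fin K × ℕ) (x : α) :
    μ (X p ⁻¹' {x}) = P p.1 x := by
  rw [← Measure.map_apply (hmeas p) (measurableSet_singleton x), hlaw p,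
    PMF.toMeasure_apply_singleton _ _ (measurableSet_singleton x)]

variable [Countable α]

lemma measure_histEvent_succ (hmeas : ∀ p, Measurable (X p)) (hindep : iIndepFun X μ)
    (hlaw : ∀ p : Fin K × ℕ, Measure.map (X p) μ = (P p.1).toMeasure)
    (ρ : List (Fin K × α) → Fin K) (h₀ : List (Fin K × α)) (n : ℕ) (h : List (Fin K × α)) :
    μ (histEvent ρ X h₀ (n + 1) h) =
      ∑' y, P (ρ h₀) y * μ (histEvent ρ X (h₀ ++ [(ρ h₀, y)]) n h) := by
  set q : Fin K × ℕ := (ρ h₀, pulls h₀ (ρ h₀))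
  have hE : ∀ y, MeasurableSet (histEvent ρ X (h₀ ++ [(ρ h₀, y)]) n h) := fun y =>
    undrawnSigma_le hmeas _ _ (measurableSet_histEvent ρ n _ h)
  rw [histEvent_succ, measure_iUnion (fun y₁ y₂ hne => ((Set.disjoint_singleton.2 hne).preimage
    (X q)).mono Set.inter_subset_left Set.inter_subset_left)
    fun y => ((hmeas q) (measurableSet_singleton y)).inter (hE y)]
  refine tsum_congr fun y => ?_
  have hq : Disjoint {q} {p : Fin K × ℕ | pulls (h₀ ++ [(ρ h₀, y)]) p.1 ≤ p.2} := by
    rw [Set.disjoint_singleton_left]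
    simp [q, pulls_append_singleton]
  have hind := indep_iSup_of_disjoint (fun p => (hmeas p).comap_le)
    ((iIndepFun_iff_iIndep _ _ _).1 hindep) hq
  rw [(Indep_iff _ _ μ).1 hind _ _ ?_ (measurableSet_histEvent ρ n _ h),
    measure_preimage_singleton hmeas hlaw]
  exact le_iSup₂ (f := fun p (_ : p ∈ ({q} : Set (Fin K × ℕ))) =>
    MeasurableSpace.comap (X p) inferInstance) q rfl _ ⟨{y}, measurableSet_singleton y, rfl⟩

lemma tsum_mul_measure_histEvent [IsProbabilityMeasure μ] (hmeas : ∀ p, Measurable (X p))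
    (hindep : iIndepFun X μ) (hlaw : ∀ p : Fin K × ℕ, Measure.map (X p) μ = (P p.1).toMeasure)
    (g : List (Fin K × α) → ℝ≥0∞) (ρ : List (Fin K × α) → Fin K) (n : ℕ)
    (h₀ : List (Fin K × α)) :
    ∑' h, g h * μ (histEvent ρ X h₀ n h) = policyValue P g ρ n h₀ := by
  induction n generalizing h₀ with
  | zero =>
    rw [tsum_eq_single h₀ fun h hne => by simp [histEvent, Ne.symm hne]]
    simp [histEvent, policyValue]
  | succ n ih =>
    simp only [policyValue, ← ih, measure_histEvent_succ hmeas hindep hlaw,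
      ← ENNReal.tsum_mul_left]
    rw [ENNReal.tsum_comm]
    exact tsum_congr fun y => tsum_congr fun h => by ring

lemma measurable_comp_iterate_extend (hmeas : ∀ p, Measurable (X p))
    (g : List (Fin K × α) → ℝ≥0∞) (ρ : List (Fin K × α) → Fin K) (n : ℕ)
    (h₀ : List (Fin K × α)) :
    Measurable fun ω => g ((extend ρ (fun i m => X (i, m) ω))^[n] h₀) := by
  simp only [comp_iterate_extend_eq_tsum_indicator]
  exact Measurable.tsum fun h =>
    measurable_const.indicator (undrawnSigma_le hmeas _ _ (measurableSet_histEvent ρ n h₀ h))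

lemma lintegral_comp_iterate_extend [IsProbabilityMeasure μ] (hmeas : ∀ p, Measurable (X p))
    (hindep : iIndepFun X μ) (hlaw : ∀ p : Fin K × ℕ, Measure.map (X p) μ = (P p.1).toMeasure)
    (g : List (Fin K × α) → ℝ≥0∞) (ρ : List (Fin K × α) → Fin K) (n : ℕ)
    (h₀ : List (Fin K × α)) :
    ∫⁻ ω, g ((extend ρ (fun i m => X (i, m) ω))^[n] h₀) ∂μ = policyValue P g ρ n h₀ := by
  have hE : ∀ h, MeasurableSet (histEvent ρ X h₀ n h) := fun h =>
    undrawnSigma_le hmeas _ _ (measurableSet_histEvent ρ n h₀ h)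
  simp only [comp_iterate_extend_eq_tsum_indicator]
  rw [lintegral_tsum fun h => (measurable_const.indicator (hE h)).aemeasurable,
    ← tsum_mul_measure_histEvent hmeas hindep hlaw]
  exact tsum_congr fun h => lintegral_indicator_const (hE h) _

lemma integral_found_traj [IsProbabilityMeasure μ] {A : Set α} (hmeas : ∀ p, Measurable (X p))
    (hindep : iIndepFun X μ) (hlaw : ∀ p : Fin K × ℕ, Measure.map (X p) μ = (P p.1).toMeasure)
    (ρ : List (Fin K × α) → Fin K) (t : ℕ) :
    ∫ ω, (found A (traj ρ (fun i n => X (i, n) ω) t) : ℝ) ∂μ =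
      (policyValue P (fun h => found A h) ρ t []).toReal := by
  simp only [traj_eq_iterate_extend]
  rw [← lintegral_comp_iterate_extend hmeas hindep hlaw, ← integral_toReal
    (measurable_comp_iterate_extend hmeas (fun h => found A h) ρ t []).aemeasurable
    (ae_of_all _ fun _ => ENNReal.natCast_lt_top _)]
  simp only [ENNReal.toReal_natCast]

end Probability

end OCL

theorem stmt_7_general {𝒳 : Type*} [Countable 𝒳] [MeasurableSpace 𝒳] [MeasurableSingletonClass 𝒳]
    (A : Set 𝒳) (K : ℕ) (P : Fin K → PMF 𝒳)
    (hdisj : ∀ i j : Fin K, i ≠ j → A ∩ (P i).support ∩ (P j).support = ∅)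
    {Θ : Type*} [MeasurableSpace Θ] (μ : Measure Θ) [IsProbabilityMeasure μ]
    (X : Fin K × ℕ → Θ → 𝒳) (hmeas : ∀ p, Measurable (X p))
    (hindep : iIndepFun X μ)
    (hlaw : ∀ p : Fin K × ℕ, Measure.map (X p) μ = (P p.1).toMeasure)
    (π πstar : List (Fin K × 𝒳) → Fin K)
    (hgreedy : ∀ h i, missingMass P A h i ≤ missingMass P A h (πstar h))
    (t : ℕ) :
    ∫ ω, (found A (traj π (fun i n => X (i, n) ω) t) : ℝ) ∂μ ≤
      ∫ ω, (found A (traj πstar (fun i n => X (i, n) ω) t) : ℝ) ∂μ := by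
  have hstar : ∀ h, OCL.IsGreedyAt P A h (πstar h) := fun h k => by
    simpa only [OCL.missingMass_eq_toReal, ENNReal.toReal_le_toReal (OCL.emissingMass_ne_top _ _)
      (OCL.emissingMass_ne_top _ _)] using hgreedy h k
  rw [OCL.integral_found_traj hmeas hindep hlaw, OCL.integral_found_traj hmeas hindep hlaw]
  exact ENNReal.toReal_mono (ne_top_of_le_ne_top (by simp) (OCL.policyValue_found_le πstar t []))
    (OCL.policyValue_found_le_of_isGreedyAt hdisj hstar π t [])

/-- Optimality of the greedy Oracle Closed-Loop policy under non-intersecting supports: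
for any policy `π` and horizon `t ≥ 1`, the expected number of interesting items found
by `π` is at most that found by any greedy policy `π*` which always requests an expert
of maximal remaining missing mass. -/
theorem stmt_7 {𝒳 : Type*} [Countable 𝒳] [MeasurableSpace 𝒳] [MeasurableSingletonClass 𝒳]
    (A : Set 𝒳) (K : ℕ) (hK : 0 < K) (P : Fin K → PMF 𝒳)
    (hdisj : ∀ i j : Fin K, i ≠ j → A ∩ (P i).support ∩ (P j).support = ∅)
    {Θ : Type*} [MeasurableSpace Θ] (μ : Measure Θ) [IsProbabilityMeasure μ]
    (X : Fin K × ℕ → Θ → 𝒳) (hmeas : ∀ p, Measurable (X p))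
    (hindep : iIndepFun X μ)
    (hlaw : ∀ p : Fin K × ℕ, Measure.map (X p) μ = (P p.1).toMeasure)
    (π πstar : List (Fin K × 𝒳) → Fin K)
    (hgreedy : ∀ h i, missingMass P A h i ≤ missingMass P A h (πstar h))
    (t : ℕ) (ht : 1 ≤ t) :
    ∫ ω, (found A (traj π (fun i n => X (i, n) ω) t) : ℝ) ∂μ ≤
      ∫ ω, (found A (traj πstar (fun i n => X (i, n) ω) t) : ℝ) ∂μ :=
  stmt_7_general A K P hdisj μ X hmeas hindep hlaw π πstar hgreedy t
end
end

section
/- Under assumption (i), for any policy $\pi$ and any $t\ge 1$, letting $\bar I_s = \arg\max_{1\le i\le K} R_{i,n^{\pi}_{i,s-1}}$ denote the expert with maximal remaining missing mass at step $s$ along $\pi$'s trajectory, the greedy oracle's expected discovery count satisfies $\mathbb{E}F^*(t) \le \sum_{s=1}^{t} \mathbb{E}\, R_{\bar I_s, n^{\pi}_{\bar I_s, s-1}}$. -/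
/-!
A policy's next draw is independent of the draws that produced the current history, so each step
discovers a new interesting item with probability equal to the missing mass of the queried expert;
for the greedy oracle this is the maximal missing mass along its own trajectory. With disjoint
supports, expert `i`'s missing mass depends only on its own first `n` draws, and is antitone in
`n`. Along every sample path the greedy allocation after `s` steps therefore has a maximal missing
mass no larger than that of any other allocation of `s` requests, in particular that of `π`.
-/

open scoped Classical

open MeasureTheory ProbabilityTheory

noncomputable section

lemma ProbabilityTheory.iIndepFun.measure_inter_preimage_eq_mul_of_notMem
    {Ω ι β : Type*} [MeasurableSpace Ω] [MeasurableSpace β] {μ : Measure Ω} {f : ι → Ω → β}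
    (hf : iIndepFun f μ) {S : Finset ι} {j : ι} (hj : j ∉ S) {sets : ι → Set β}
    (hsets : ∀ i ∈ S, MeasurableSet (sets i)) {B : Set β} (hB : MeasurableSet B) :
    μ ((⋂ i ∈ S, f i ⁻¹' sets i) ∩ f j ⁻¹' B) =
      μ (⋂ i ∈ S, f i ⁻¹' sets i) * μ (f j ⁻¹' B) := by
  have hupd : ∀ i ∈ S, Function.update sets j B i = sets i :=
    fun i hi => Function.update_of_ne (ne_of_mem_of_not_mem hi hj) _ _
  have h := hf.measure_inter_preimage_eq_mul (insert j S) (sets := Function.update sets j B)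
    (fun i hi => by
      rcases Finset.mem_insert.1 hi with rfl | hi
      · simpa using hB
      · simpa [hupd i hi] using hsets i hi)
  rw [Finset.set_biInter_insert, Finset.prod_insert hj, Function.update_self,
    Set.iInter₂_congr fun i hi => by rw [hupd i hi],
    Finset.prod_congr rfl fun i hi => by rw [hupd i hi],
    ← hf.measure_inter_preimage_eq_mul S hsets] at h
  rw [Set.inter_comm, h, mul_comm]

section Discovery

variable {K : ℕ} {𝒳 : Type*}

section Trajectory

variable (π : List (Fin K × 𝒳) → Fin K) (samp : Fin K → ℕ → 𝒳)

def seen (h : List (Fin K × 𝒳)) : Set 𝒳 := {x | ∃ p ∈ h, p.2 = x}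

@[simp]
lemma mem_seen {h : List (Fin K × 𝒳)} {x : 𝒳} : x ∈ seen h ↔ ∃ p ∈ h, p.2 = x := Iff.rfl

lemma seen_append_singleton (h : List (Fin K × 𝒳)) (p : Fin K × 𝒳) :
    seen (h ++ [p]) = insert p.2 (seen h) := by
  ext x
  simp [or_comm, eq_comm]

lemma finite_seen (h : List (Fin K × 𝒳)) : (seen h).Finite :=
  h.finite_toSet.image Prod.snd

lemma pulls_append (h : List (Fin K × 𝒳)) (p : Fin K × 𝒳) (i : Fin K) :
    pulls (h ++ [p]) i = pulls h i + if p.1 = i then 1 else 0 := by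
  by_cases hp : p.1 = i <;> simp [pulls, hp]

lemma pulls_le_length (h : List (Fin K × 𝒳)) (i : Fin K) : pulls h i ≤ h.length :=
  List.length_filter_le _ _

lemma sum_pulls (h : List (Fin K × 𝒳)) : ∑ i, pulls h i = h.length := by
  induction h using List.reverseRecOn with
  | nil => simp [pulls]
  | append_singleton h p ih => simp [pulls_append, Finset.sum_add_distrib, ih]

def draws (i : Fin K) (n : ℕ) : List (Fin K × 𝒳) := (List.range n).map fun m => (i, samp i m)

def nextDraw (h : List (Fin K × 𝒳)) : Fin K × 𝒳 := (π h, samp (π h) (pulls h (π h)))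

lemma traj_succ (t : ℕ) :
    traj π samp (t + 1) = traj π samp t ++ [nextDraw π samp (traj π samp t)] := rfl

lemma length_traj (t : ℕ) : (traj π samp t).length = t := by
  induction t with
  | zero => rfl
  | succ t ih => simp [traj_succ, ih]

lemma pulls_traj_mono (i : Fin K) : Monotone fun s => pulls (traj π samp s) i :=
  monotone_nat_of_le_succ fun s => by simp only [traj_succ, pulls_append]; omega

lemma filter_traj (s : ℕ) (i : Fin K) :
    (traj π samp s).filter (fun p => p.1 = i) = draws samp i (pulls (traj π samp s) i) := by
  induction s with
  | zero => simp [traj, pulls, draws]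
  | succ s ih =>
    by_cases hi : π (traj π samp s) = i
    · subst hi
      simp [traj_succ, nextDraw, pulls_append, ih, draws, List.range_succ]
    · simp [traj_succ, nextDraw, pulls_append, ih, hi]

lemma exists_eq_samp_of_mem_traj {s : ℕ} {p : Fin K × 𝒳} (hp : p ∈ traj π samp s) :
    ∃ m, p.2 = samp p.1 m := by
  have : p ∈ (traj π samp s).filter (fun q => q.1 = p.1) := List.mem_filter.2 ⟨hp, by simp⟩
  obtain ⟨m, -, hm⟩ := List.mem_map.1 (filter_traj π samp s p.1 ▸ this)
  exact ⟨m, by rw [← hm]⟩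

lemma exists_lt_of_lt_pulls {s : ℕ} {j : Fin K} {c : ℕ} (hc : c < pulls (traj π samp s) j) :
    ∃ s' < s, π (traj π samp s') = j ∧ pulls (traj π samp s') j = c := by
  induction s with
  | zero => simp [traj, pulls] at hc
  | succ s ih =>
    rw [traj_succ, pulls_append] at hc
    by_cases hc' : c < pulls (traj π samp s) j
    · obtain ⟨s', hs', h⟩ := ih hc'
      exact ⟨s', by omega, h⟩
    · by_cases hj : π (traj π samp s) = j
      · exact ⟨s, by omega, hj, by simp [nextDraw, hj] at hc; omega⟩
      · simp [nextDraw, hj] at hc; omega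

lemma traj_eq_traj_iff (samp' : Fin K → ℕ → 𝒳) (s : ℕ) :
    traj π samp s = traj π samp' s ↔
      ∀ i, ∀ m < pulls (traj π samp' s) i, samp i m = samp' i m := by
  refine ⟨fun heq i m hm => ?_, fun hag => ?_⟩
  · have h := filter_traj π samp s i
    rw [heq, filter_traj, draws, draws, List.map_inj_left] at h
    simpa using (h m (List.mem_range.2 hm)).symm
  · suffices ∀ k ≤ s, traj π samp k = traj π samp' k from this s le_rfl
    intro k hk
    induction k with
    | zero => rfl
    | succ k ih =>
      rw [traj_succ, traj_succ, ih (by omega), nextDraw, nextDraw,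
        hag _ _ (lt_of_lt_of_le ?_ (pulls_traj_mono π samp' _ hk))]
      simp [traj_succ, nextDraw, pulls_append]

/-- If `n` undercounts some `j` relative to `π`, then when `π` made its `(n j + 1)`-th request
to `j`, the value `R j (n j)` dominated every current value, in particular `R i₀`'s. -/
lemma exists_le_of_greedy {β : Type*} [Preorder β] (R : Fin K → ℕ → β)
    (hR : ∀ i, Antitone (R i))
    (hgreedy : ∀ k i, R i (pulls (traj π samp k) i) ≤
      R (π (traj π samp k)) (pulls (traj π samp k) (π (traj π samp k))))
    {s : ℕ} {n : Fin K → ℕ} (hn : ∑ i, n i ≤ s) (i₀ : Fin K) :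
    ∃ j, R i₀ (pulls (traj π samp s) i₀) ≤ R j (n j) := by
  by_cases h : n i₀ ≤ pulls (traj π samp s) i₀
  · exact ⟨i₀, hR i₀ h⟩
  obtain ⟨j, hj⟩ : ∃ j, n j < pulls (traj π samp s) j := by
    by_contra! hle
    have := Finset.sum_lt_sum (fun i _ => hle i) ⟨i₀, Finset.mem_univ _, not_le.1 h⟩
    rw [sum_pulls, length_traj] at this
    omega
  obtain ⟨s', hs', rfl, hc⟩ := exists_lt_of_lt_pulls π samp hj
  exact ⟨π (traj π samp s'), (hR i₀ (pulls_traj_mono π samp i₀ hs'.le)).trans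
    ((hgreedy s' i₀).trans_eq (by rw [hc]))⟩

def consumed (h : List (Fin K × 𝒳)) : Finset (Fin K × ℕ) :=
  (Finset.univ ×ˢ Finset.range h.length).filter fun p => p.2 < pulls h p.1

lemma mem_consumed {h : List (Fin K × 𝒳)} {p : Fin K × ℕ} :
    p ∈ consumed h ↔ p.2 < pulls h p.1 := by
  simp only [consumed, Finset.mem_filter, Finset.mem_product, Finset.mem_univ, Finset.mem_range,
    true_and, and_iff_right_iff_imp]
  exact fun hp => hp.trans_le (pulls_le_length h p.1)

end Trajectory

section Found

variable (π : List (Fin K × 𝒳) → Fin K) (samp : Fin K → ℕ → 𝒳) (A : Set 𝒳)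

lemma found_append (h : List (Fin K × 𝒳)) (p : Fin K × 𝒳) :
    found A (h ++ [p]) = found A h + if p.2 ∈ A \ seen h then 1 else 0 := by
  change (A ∩ seen (h ++ [p])).ncard = (A ∩ seen h).ncard + _
  rw [seen_append_singleton]
  by_cases hA : p.2 ∈ A
  · rw [Set.inter_insert_of_mem hA, Set.ncard_insert_eq_ite ((finite_seen h).inter_of_right A)]
    by_cases hs : p.2 ∈ seen h <;> simp [hA, hs]
  · simp [Set.inter_insert_of_notMem hA, hA]

lemma found_traj (t : ℕ) :
    found A (traj π samp t) = ∑ s ∈ Finset.range t,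
      if (nextDraw π samp (traj π samp s)).2 ∈ A \ seen (traj π samp s) then 1 else 0 := by
  induction t with
  | zero => simp [traj, found]
  | succ t ih => rw [Finset.sum_range_succ, ← ih, traj_succ, found_append]

end Found

section MissingMass

variable [MeasurableSpace 𝒳] [MeasurableSingletonClass 𝒳] (P : Fin K → PMF 𝒳) (A : Set 𝒳)

lemma missingMass_eq_measureReal (h : List (Fin K × 𝒳)) (i : Fin K) :
    missingMass P A h i = (P i).toMeasure.real (A \ seen h) := by
  rw [measureReal_def, PMF.toMeasure_apply_eq_tsum, ENNReal.tsum_toReal_eq, missingMass,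
    show {x | ∃ p ∈ h, p.2 = x} = seen h from rfl,
    tsum_subtype (A \ seen h) fun x => (P i x).toReal]
  · congr 1 with x
    by_cases hx : x ∈ A \ seen h <;> simp only [Set.indicator_apply, hx, if_true, if_false,
      ENNReal.toReal_zero]
  · exact fun x => ne_top_of_le_ne_top ENNReal.one_ne_top
      (Set.indicator_le_self' (fun _ _ => zero_le) x |>.trans ((P i).coe_le_one x))

lemma missingMass_nonneg (h : List (Fin K × 𝒳)) (i : Fin K) : 0 ≤ missingMass P A h i := by
  rw [missingMass_eq_measureReal]
  exact measureReal_nonneg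

lemma missingMass_le_one (h : List (Fin K × 𝒳)) (i : Fin K) : missingMass P A h i ≤ 1 := by
  rw [missingMass_eq_measureReal]
  exact measureReal_le_one

lemma abs_missingMass_le_one (h : List (Fin K × 𝒳)) (i : Fin K) : |missingMass P A h i| ≤ 1 :=
  abs_le.2 ⟨by linarith [missingMass_nonneg P A h i], missingMass_le_one P A h i⟩

lemma missingMass_anti {h h' : List (Fin K × 𝒳)} (hsub : seen h ⊆ seen h') (i : Fin K) :
    missingMass P A h' i ≤ missingMass P A h i := by
  simp only [missingMass_eq_measureReal]
  exact measureReal_mono (Set.sdiff_subset_sdiff_right hsub)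

lemma missingMass_draws_antitone (samp : Fin K → ℕ → 𝒳) (i : Fin K) :
    Antitone fun n => missingMass P A (draws samp i n) i := by
  intro n n' hn
  refine missingMass_anti P A ?_ i
  simp only [Set.subset_def, mem_seen, draws, List.mem_map, List.mem_range]
  rintro x ⟨_, ⟨m, hm, rfl⟩, rfl⟩
  exact ⟨_, ⟨m, by omega, rfl⟩, rfl⟩

variable (hdisj : ∀ i j : Fin K, i ≠ j → A ∩ (P i).support ∩ (P j).support = ∅)
include hdisj

lemma missingMass_filter {h : List (Fin K × 𝒳)} (hh : ∀ p ∈ h, p.2 ∈ (P p.1).support)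
    (i : Fin K) : missingMass P A h i = missingMass P A (h.filter fun p => p.1 = i) i := by
  simp only [missingMass_eq_measureReal, measureReal_def, PMF.toMeasure_apply_eq_toOuterMeasure]
  congr 1
  refine PMF.toOuterMeasure_apply_eq_of_inter_support_eq _ (Set.ext fun x => ?_)
  simp only [Set.mem_inter_iff, Set.mem_sdiff, mem_seen, List.mem_filter, decide_eq_true_eq]
  refine ⟨fun ⟨⟨hA, hx⟩, hi⟩ => ⟨⟨hA, fun ⟨p, ⟨hp, _⟩, hpx⟩ => hx ⟨p, hp, hpx⟩⟩, hi⟩,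
    fun ⟨⟨hA, hx⟩, hi⟩ => ⟨⟨hA, fun ⟨p, hp, hpx⟩ => hx ⟨p, ⟨hp, ?_⟩, hpx⟩⟩, hi⟩⟩
  by_contra hpi
  have : x ∈ A ∩ (P i).support ∩ (P p.1).support := ⟨⟨hA, hi⟩, hpx ▸ hh p hp⟩
  rw [hdisj i p.1 (Ne.symm hpi)] at this
  exact this

lemma missingMass_traj (π : List (Fin K × 𝒳) → Fin K) {samp : Fin K → ℕ → 𝒳}
    (hsamp : ∀ i n, samp i n ∈ (P i).support) (s : ℕ) (i : Fin K) :
    missingMass P A (traj π samp s) i =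
      missingMass P A (draws samp i (pulls (traj π samp s) i)) i := by
  rw [missingMass_filter P A hdisj (fun p hp => ?_), filter_traj]
  obtain ⟨m, hm⟩ := exists_eq_samp_of_mem_traj π samp hp
  exact hm ▸ hsamp p.1 m

lemma missingMass_greedy_le_iSup (π πstar : List (Fin K × 𝒳) → Fin K)
    (hgreedy : ∀ h i, missingMass P A h i ≤ missingMass P A h (πstar h))
    {samp : Fin K → ℕ → 𝒳} (hsamp : ∀ i n, samp i n ∈ (P i).support) (s : ℕ) :
    missingMass P A (traj πstar samp s) (πstar (traj πstar samp s)) ≤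
      ⨆ i, missingMass P A (traj π samp s) i := by
  obtain ⟨j, hj⟩ := exists_le_of_greedy πstar samp
    (fun i n => missingMass P A (draws samp i n) i) (missingMass_draws_antitone P A samp)
    (fun k i => by
      simpa only [missingMass_traj P A hdisj _ hsamp] using hgreedy (traj πstar samp k) i)
    (n := fun i => pulls (traj π samp s) i) (by rw [sum_pulls, length_traj])
    (πstar (traj πstar samp s))
  rw [missingMass_traj P A hdisj _ hsamp]
  refine hj.trans ?_
  rw [← missingMass_traj P A hdisj _ hsamp]
  exact le_ciSup (Set.finite_range _).bddAbove j

end MissingMass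

section Probability

variable {Θ : Type*} {X : Fin K × ℕ → Θ → 𝒳} (π : List (Fin K × 𝒳) → Fin K) (s : ℕ)

lemma setOf_traj_eq {h : List (Fin K × 𝒳)} {ω₀ : Θ}
    (hω₀ : traj π (fun i n => X (i, n) ω₀) s = h) :
    {ω | traj π (fun i n => X (i, n) ω) s = h} = ⋂ p ∈ consumed h, X p ⁻¹' {X p ω₀} := by
  subst hω₀
  ext ω
  simp only [Set.mem_ofPred_eq, traj_eq_traj_iff, Set.mem_iInter, Set.mem_preimage,
    Set.mem_singleton_iff, mem_consumed]
  exact ⟨fun H p hp => H p.1 p.2 hp, fun H i m hm => H (i, m) hm⟩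

lemma setOf_nextDraw_mem (B : List (Fin K × 𝒳) → Set 𝒳) :
    {ω | (nextDraw π (fun i n => X (i, n) ω) (traj π (fun i n => X (i, n) ω) s)).2 ∈
        B (traj π (fun i n => X (i, n) ω) s)} =
      ⋃ h, {ω | traj π (fun i n => X (i, n) ω) s = h} ∩ X (π h, pulls h (π h)) ⁻¹' B h := by
  ext ω
  simp only [Set.mem_ofPred_eq, Set.mem_iUnion, Set.mem_inter_iff, Set.mem_preimage]
  exact ⟨fun hω => ⟨_, rfl, hω⟩, fun ⟨_, hh, hω⟩ => hh ▸ hω⟩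

variable [MeasurableSpace 𝒳] [MeasurableSingletonClass 𝒳] [MeasurableSpace Θ]
  (hX : ∀ p, Measurable (X p))
include hX

lemma measurableSet_traj_eq (h : List (Fin K × 𝒳)) :
    MeasurableSet {ω | traj π (fun i n => X (i, n) ω) s = h} := by
  rcases Set.eq_empty_or_nonempty {ω | traj π (fun i n => X (i, n) ω) s = h}
    with he | ⟨ω₀, hω₀⟩
  · rw [he]
    exact .empty
  · rw [setOf_traj_eq π s hω₀]
    exact Finset.measurableSet_biInter _ fun p _ => hX p (measurableSet_singleton _)

variable [Countable 𝒳]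

lemma measurable_traj :
    @Measurable Θ (List (Fin K × 𝒳)) _ ⊤ fun ω => traj π (fun i n => X (i, n) ω) s :=
  @measurable_to_countable' _ _ ⊤ _ _ _ (measurableSet_traj_eq π s hX)

variable (μ : Measure Θ)

lemma integrable_comp_traj [IsFiniteMeasure μ] {g : List (Fin K × 𝒳) → ℝ} {C : ℝ}
    (hg : ∀ h, |g h| ≤ C) : Integrable (fun ω => g (traj π (fun i n => X (i, n) ω) s)) μ :=
  .of_bound (measurable_from_top.comp (measurable_traj π s hX)).aestronglyMeasurable C
    (.of_forall fun _ => hg _)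

lemma integral_comp_traj [IsFiniteMeasure μ] {g : List (Fin K × 𝒳) → ℝ} {C : ℝ}
    (hg : ∀ h, |g h| ≤ C) :
    ∫ ω, g (traj π (fun i n => X (i, n) ω) s) ∂μ =
      ∑' h, μ.real {ω | traj π (fun i n => X (i, n) ω) s = h} * g h := by
  let : MeasurableSpace (List (Fin K × 𝒳)) := ⊤
  have : MeasurableSingletonClass (List (Fin K × 𝒳)) := ⟨fun _ => trivial⟩
  have hF := measurable_traj π s hX
  rw [← integral_map hF.aemeasurable measurable_from_top.aestronglyMeasurable,
    integral_countable]
  · simp only [smul_eq_mul, measureReal_def, Measure.map_apply hF trivial]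
    rfl
  · rw [integrable_map_measure measurable_from_top.aestronglyMeasurable hF.aemeasurable]
    exact integrable_comp_traj π s hX μ hg

lemma measurableSet_nextDraw_mem (B : List (Fin K × 𝒳) → Set 𝒳) :
    MeasurableSet {ω |
      (nextDraw π (fun i n => X (i, n) ω) (traj π (fun i n => X (i, n) ω) s)).2 ∈
        B (traj π (fun i n => X (i, n) ω) s)} := by
  rw [setOf_nextDraw_mem π s B]
  exact .iUnion fun h =>
    (measurableSet_traj_eq π s hX h).inter (hX _ (B h).to_countable.measurableSet)

variable {μ} (P : Fin K → PMF 𝒳) (hindep : iIndepFun X μ)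
  (hlaw : ∀ p : Fin K × ℕ, μ.map (X p) = (P p.1).toMeasure)
include hindep hlaw

/-- The event `traj = h` only constrains the draws in `consumed h`, which exclude the next one. -/
lemma measure_traj_eq_inter_nextDraw (h : List (Fin K × 𝒳)) (B : Set 𝒳) :
    μ ({ω | traj π (fun i n => X (i, n) ω) s = h} ∩ X (π h, pulls h (π h)) ⁻¹' B) =
      μ {ω | traj π (fun i n => X (i, n) ω) s = h} * (P (π h)).toMeasure B := by
  rcases Set.eq_empty_or_nonempty {ω | traj π (fun i n => X (i, n) ω) s = h}
    with he | ⟨ω₀, hω₀⟩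
  · simp [he]
  rw [setOf_traj_eq π s hω₀, hindep.measure_inter_preimage_eq_mul_of_notMem
      (by simp [mem_consumed]) (fun p _ => measurableSet_singleton _) B.to_countable.measurableSet,
    ← Measure.map_apply (hX _) B.to_countable.measurableSet, hlaw]

variable [IsProbabilityMeasure μ] (A : Set 𝒳)

lemma measureReal_nextDraw_mem_sdiff_seen :
    μ.real {ω | (nextDraw π (fun i n => X (i, n) ω) (traj π (fun i n => X (i, n) ω) s)).2 ∈
        A \ seen (traj π (fun i n => X (i, n) ω) s)} =
      ∫ ω, missingMass P A (traj π (fun i n => X (i, n) ω) s)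
        (π (traj π (fun i n => X (i, n) ω) s)) ∂μ := by
  rw [setOf_nextDraw_mem π s fun h => A \ seen h, measureReal_def, measure_iUnion ?_ fun h =>
      (measurableSet_traj_eq π s hX h).inter (hX _ (A \ seen h).to_countable.measurableSet),
    ENNReal.tsum_toReal_eq fun _ => measure_ne_top _ _,
    integral_comp_traj π s hX μ (g := fun h => missingMass P A h (π h)) (C := 1) fun h =>
      abs_missingMass_le_one P A h (π h)]
  · refine tsum_congr fun h => ?_
    rw [measure_traj_eq_inter_nextDraw π s hX P hindep hlaw, ENNReal.toReal_mul,
      missingMass_eq_measureReal, measureReal_def, measureReal_def]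
  · exact fun h h' hne => Set.disjoint_left.2 fun ω hω hω' => hne (hω.1.symm.trans hω'.1)

theorem integral_found_traj (t : ℕ) :
    ∫ ω, (found A (traj π (fun i n => X (i, n) ω) t) : ℝ) ∂μ =
      ∑ s ∈ Finset.range t, ∫ ω, missingMass P A (traj π (fun i n => X (i, n) ω) s)
        (π (traj π (fun i n => X (i, n) ω) s)) ∂μ := by
  let novel s := {ω |
    (nextDraw π (fun i n => X (i, n) ω) (traj π (fun i n => X (i, n) ω) s)).2 ∈
      A \ seen (traj π (fun i n => X (i, n) ω) s)}
  have hnovel : ∀ s, MeasurableSet (novel s) := fun s =>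
    measurableSet_nextDraw_mem π s hX fun h => A \ seen h
  have hfound : ∀ ω, (found A (traj π (fun i n => X (i, n) ω) t) : ℝ) =
      ∑ s ∈ Finset.range t, (novel s).indicator 1 ω := by
    intro ω
    rw [found_traj]
    push_cast
    refine Finset.sum_congr rfl fun s _ => ?_
    simp [novel, Set.indicator_apply]
  simp_rw [hfound]
  rw [integral_finsetSum _ fun s _ => (integrable_const 1).indicator (hnovel s)]
  refine Finset.sum_congr rfl fun s _ => ?_
  rw [integral_indicator_one (hnovel s), measureReal_nextDraw_mem_sdiff_seen π s hX P hindep hlaw]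

end Probability

lemma ae_mem_support [Countable 𝒳] [MeasurableSpace 𝒳] [MeasurableSingletonClass 𝒳]
    {Θ : Type*} [MeasurableSpace Θ] {μ : Measure Θ} {X : Fin K × ℕ → Θ → 𝒳}
    (hX : ∀ p, Measurable (X p)) {P : Fin K → PMF 𝒳}
    (hlaw : ∀ p : Fin K × ℕ, μ.map (X p) = (P p.1).toMeasure) :
    ∀ᵐ ω ∂μ, ∀ i n, X (i, n) ω ∈ (P i).support := by
  refine ae_all_iff.2 fun i => ae_all_iff.2 fun n => ?_
  change μ (X (i, n) ⁻¹' (P i).supportᶜ) = 0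
  rw [← Measure.map_apply (hX _) (Set.to_countable _).measurableSet, hlaw,
    PMF.toMeasure_apply_eq_zero_iff _ (Set.to_countable _).measurableSet]
  exact disjoint_compl_right

end Discovery

theorem stmt_8_general {𝒳 : Type*} [Countable 𝒳] [MeasurableSpace 𝒳] [MeasurableSingletonClass 𝒳]
    (A : Set 𝒳) (K : ℕ) (hK : 0 < K) (P : Fin K → PMF 𝒳)
    (hdisj : ∀ i j : Fin K, i ≠ j → A ∩ (P i).support ∩ (P j).support = ∅)
    {Θ : Type*} [MeasurableSpace Θ] (μ : Measure Θ) [IsProbabilityMeasure μ]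
    (X : Fin K × ℕ → Θ → 𝒳) (hmeas : ∀ p, Measurable (X p))
    (hindep : iIndepFun X μ)
    (hlaw : ∀ p : Fin K × ℕ, Measure.map (X p) μ = (P p.1).toMeasure)
    (π πstar : List (Fin K × 𝒳) → Fin K)
    (hgreedy : ∀ h i, missingMass P A h i ≤ missingMass P A h (πstar h))
    (t : ℕ) :
    haveI : Nonempty (Fin K) := Fin.pos_iff_nonempty.mp hK
    ∫ ω, (found A (traj πstar (fun i n => X (i, n) ω) t) : ℝ) ∂μ ≤
      ∑ s ∈ Finset.range t,
        ∫ ω, ⨆ i : Fin K, missingMass P A (traj π (fun i n => X (i, n) ω) s) i ∂μ := by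
  rw [integral_found_traj πstar hmeas P hindep hlaw A t]
  refine Finset.sum_le_sum fun s _ => integral_mono_ae
    (integrable_comp_traj πstar s hmeas μ fun h => abs_missingMass_le_one P A h (πstar h))
    (integrable_comp_traj π s hmeas μ fun h => abs_le.2
      ⟨by linarith [Real.iSup_nonneg fun i => missingMass_nonneg P A h i],
        Real.iSup_le (fun i => missingMass_le_one P A h i) zero_le_one⟩) ?_
  filter_upwards [ae_mem_support hmeas hlaw] with ω hω
  exact missingMass_greedy_le_iSup P A hdisj π πstar hgreedy hω s

/-- Under non-intersecting supports, the greedy oracle's expected discovery count is at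
most the sum over steps `s = 1,…,t` of the expected maximal remaining missing mass
`R_{Ī_s, n^π_{Ī_s, s-1}}` along the trajectory of an arbitrary policy `π`. -/
theorem stmt_8 {𝒳 : Type*} [Countable 𝒳] [MeasurableSpace 𝒳] [MeasurableSingletonClass 𝒳]
    (A : Set 𝒳) (K : ℕ) (hK : 0 < K) (P : Fin K → PMF 𝒳)
    (hdisj : ∀ i j : Fin K, i ≠ j → A ∩ (P i).support ∩ (P j).support = ∅)
    {Θ : Type*} [MeasurableSpace Θ] (μ : Measure Θ) [IsProbabilityMeasure μ]
    (X : Fin K × ℕ → Θ → 𝒳) (hmeas : ∀ p, Measurable (X p))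
    (hindep : iIndepFun X μ)
    (hlaw : ∀ p : Fin K × ℕ, Measure.map (X p) μ = (P p.1).toMeasure)
    (π πstar : List (Fin K × 𝒳) → Fin K)
    (hgreedy : ∀ h i, missingMass P A h i ≤ missingMass P A h (πstar h))
    (t : ℕ) (ht : 1 ≤ t) :
    haveI : Nonempty (Fin K) := Fin.pos_iff_nonempty.mp hK
    ∫ ω, (found A (traj πstar (fun i n => X (i, n) ω) t) : ℝ) ∂μ ≤
      ∑ s ∈ Finset.range t,
        ∫ ω, ⨆ i : Fin K, missingMass P A (traj π (fun i n => X (i, n) ω) s) i ∂μ :=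
  stmt_8_general A K hK P hdisj μ X hmeas hindep hlaw π πstar hgreedy t
end
end

section
/- Let $q_1\ge\dots\ge q_K>0$ and define $F(t)=\sum_{i=1}^K (q_i - T^{-1}(t))_+$ for $t>0$, where $T(\lambda)=\sum_{i:q_i>\lambda}\log(q_i/\lambda)$. Then, with $q=\sum_{i=1}^K q_i$, there exists a nondecreasing function $I:(0,\infty)\to\{1,\dots,K\}$ such that for each $t$, $F(t)=q - I(t)\,\underline q_{I(t)}\,\exp(-t/I(t)) - \sum_{i>I(t)} q_i$, where $\underline q_j=(q_1\cdots q_j)^{1/j}$ denotes the geometric mean of the $j$ largest proportions. -/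
open Set Finset Real

/-!
Only the items with `q i > λ` contribute to `T(λ)` and to `F`. For `λ = T⁻¹(t)` let `m` be their
number; since `q` is sorted they are the first `m` items. Then `t = T(λ) = ∑_{i<m} log q_i - m log λ`,
i.e. `λ = q̲_m e^{-t/m}`, and `F(t) = ∑_{i<m} q_i - m λ` is the claimed formula with `I(t) = m`.
As `T` is strictly decreasing below `q_1`, `T⁻¹` is decreasing, so `I` is nondecreasing.
-/

theorem StrictAntiOn.antitoneOn_of_rightInvOn {α β : Type*} [LinearOrder α] [Preorder β]
    {f : α → β} {g : β → α} {s : Set α} {t : Set β} (hf : StrictAntiOn f s)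
    (hg : MapsTo g t s) (hfg : RightInvOn g f t) : AntitoneOn g t :=
  fun x hx y hy hxy => (hf.le_iff_ge (hg hx) (hg hy)).1 (by rwa [hfg hx, hfg hy])

theorem Fin.mem_iff_lt_card_of_isLowerSet {K : ℕ} {S : Finset (Fin K)}
    (hS : IsLowerSet (S : Set (Fin K))) (i : Fin K) : i ∈ S ↔ (i : ℕ) < #S := by
  constructor
  · intro hi
    have := Finset.card_le_card (fun j hj => hS (mem_Iic.1 hj) hi : Finset.Iic i ⊆ S)
    rw [Fin.card_Iic] at this
    omega
  · intro hi
    by_contra hni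
    have := Finset.card_le_card
      (fun j hj => mem_Iio.2 (lt_of_not_ge fun hij => hni (hS hij hj)) : S ⊆ Finset.Iio i)
    rw [Fin.card_Iio] at this
    omega

theorem Fin.sum_ite_val_lt_card_of_isLowerSet {K : ℕ} {M : Type*} [AddCommMonoid M]
    {S : Finset (Fin K)} (hS : IsLowerSet (S : Set (Fin K))) (f : Fin K → M) :
    (∑ j : Fin K, if (j : ℕ) < #S then f j else 0) = ∑ j ∈ S, f j := by
  rw [← sum_filter]
  congr 1
  ext i
  simp only [mem_filter, Finset.mem_univ, true_and, Fin.mem_iff_lt_card_of_isLowerSet hS]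

theorem Fin.sum_ite_card_le_val_of_isLowerSet {K : ℕ} {M : Type*} [AddCommGroup M]
    {S : Finset (Fin K)} (hS : IsLowerSet (S : Set (Fin K))) (f : Fin K → M) :
    (∑ j : Fin K, if #S ≤ (j : ℕ) then f j else 0) = ∑ j, f j - ∑ j ∈ S, f j := by
  rw [eq_sub_iff_add_eq', ← Fin.sum_ite_val_lt_card_of_isLowerSet hS, ← sum_add_distrib]
  refine sum_congr rfl fun j _ => ?_
  split_ifs <;> first | omega | simp

theorem exp_div_mul_exp_neg_div_eq {S t m lam : ℝ} (hm : m ≠ 0) (hlam : 0 < lam)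
    (ht : t = S - m * log lam) : exp (S / m) * exp (-t / m) = lam := by
  rw [← exp_add, ht, show S / m + -(S - m * log lam) / m = log lam by field_simp; ring,
    exp_log hlam]

theorem sum_log_div_eq {ι : Type*} {q : ι → ℝ} {lam : ℝ} {s : Finset ι} (hq : ∀ i ∈ s, 0 < q i)
    (hlam : 0 < lam) : ∑ i ∈ s, log (q i / lam) = ∑ i ∈ s, log (q i) - #s * log lam := by
  rw [sum_congr rfl fun i hi => log_div (hq i hi).ne' hlam.ne', sum_sub_distrib, sum_const,
    nsmul_eq_mul]

section ActiveSet

variable {ι : Type*} [Fintype ι]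

noncomputable def activeSet (q : ι → ℝ) (lam : ℝ) : Finset ι := univ.filter fun i => lam < q i

@[simp]
theorem mem_activeSet {q : ι → ℝ} {lam : ℝ} {i : ι} : i ∈ activeSet q lam ↔ lam < q i := by
  simp [activeSet]

theorem activeSet_anti (q : ι → ℝ) : Antitone (activeSet q) :=
  fun _ _ h _ hi => mem_activeSet.2 (h.trans_lt (mem_activeSet.1 hi))

theorem isLowerSet_activeSet [Preorder ι] {q : ι → ℝ} (hq : Antitone q) (lam : ℝ) :
    IsLowerSet (activeSet q lam : Set ι) :=
  fun _ _ hij hi => mem_activeSet.2 ((mem_activeSet.1 hi).trans_le (hq hij))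

theorem sum_max_sub_zero_eq (q : ι → ℝ) (lam : ℝ) :
    ∑ i, max (q i - lam) 0 = ∑ i ∈ activeSet q lam, q i - #(activeSet q lam) * lam := by
  rw [← nsmul_eq_mul, ← sum_const, ← sum_sub_distrib, activeSet, sum_filter]
  refine sum_congr rfl fun i _ => ?_
  split_ifs with h
  · exact max_eq_left (sub_nonneg.2 h.le)
  · exact max_eq_right (sub_nonpos.2 (not_lt.1 h))

theorem strictAntiOn_sum_log_div {q : ι → ℝ} (hq : ∀ i, 0 < q i) (i₀ : ι) :
    StrictAntiOn (fun lam => ∑ i ∈ activeSet q lam, log (q i / lam)) (Ioo 0 (q i₀)) := by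
  rintro a ⟨ha, -⟩ b ⟨-, hb⟩ hab
  calc ∑ i ∈ activeSet q b, log (q i / b)
      < ∑ i ∈ activeSet q b, log (q i / a) :=
        sum_lt_sum_of_nonempty ⟨i₀, mem_activeSet.2 hb⟩ fun i _ =>
          log_lt_log (div_pos (hq i) (ha.trans hab)) (div_lt_div_of_pos_left (hq i) ha hab)
    _ ≤ ∑ i ∈ activeSet q a, log (q i / a) :=
        sum_le_sum_of_subset_of_nonneg (activeSet_anti q hab.le) fun i hi _ =>
          log_nonneg ((one_le_div ha).2 (mem_activeSet.1 hi).le)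

end ActiveSet

theorem stmt_19_general (K : ℕ) (hK : 0 < K) (q : Fin K → ℝ) (hq : ∀ i, 0 < q i)
    (hsorted : ∀ i j : Fin K, i ≤ j → q j ≤ q i)
    (T Tinv : ℝ → ℝ)
    (hT : ∀ lam : ℝ, T lam =
      ∑ i ∈ Finset.univ.filter (fun i : Fin K => lam < q i), Real.log (q i / lam))
    (hinv₂ : ∀ t ∈ Ioi (0 : ℝ), Tinv t ∈ Ioo (0 : ℝ) (q ⟨0, hK⟩) ∧ T (Tinv t) = t) :
    ∃ I : ℝ → ℕ, MonotoneOn I (Ioi 0) ∧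
      ∀ t : ℝ, 0 < t → 1 ≤ I t ∧ I t ≤ K ∧
        ∑ i, max (q i - Tinv t) 0 =
          (∑ i, q i)
          - (I t) * Real.exp ((∑ j : Fin K, if (j : ℕ) < I t then Real.log (q j) else 0)
              / (I t)) * Real.exp (-t / I t)
          - ∑ j : Fin K, if I t ≤ (j : ℕ) then q j else 0 := by
  have hTinv : AntitoneOn Tinv (Ioi 0) :=
    ((funext hT : T = _) ▸ strictAntiOn_sum_log_div hq ⟨0, hK⟩).antitoneOn_of_rightInvOn
      (fun t ht => (hinv₂ t ht).1) fun t ht => (hinv₂ t ht).2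
  refine ⟨fun t => #(activeSet q (Tinv t)),
    fun s hs t ht hst => card_le_card (activeSet_anti q (hTinv hs ht hst)), fun t ht => ?_⟩
  obtain ⟨⟨hlam, hlam_lt⟩, hTt⟩ := hinv₂ t ht
  set A := activeSet q (Tinv t)
  have hA : IsLowerSet (A : Set (Fin K)) := isLowerSet_activeSet hsorted (Tinv t)
  have hm : 0 < #A := card_pos.2 ⟨⟨0, hK⟩, mem_activeSet.2 hlam_lt⟩
  have ht_eq : t = ∑ i ∈ A, log (q i) - #A * log (Tinv t) :=
    hTt.symm.trans ((hT _).trans (sum_log_div_eq (fun i _ => hq i) hlam))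
  refine ⟨hm, card_le_univ A |>.trans_eq (Fintype.card_fin K), ?_⟩
  rw [sum_max_sub_zero_eq, Fin.sum_ite_val_lt_card_of_isLowerSet hA,
    Fin.sum_ite_card_le_val_of_isLowerSet hA, mul_assoc,
    exp_div_mul_exp_neg_div_eq (by exact_mod_cast hm.ne') hlam ht_eq]
  ring

/-- With `q₁ ≥ … ≥ q_K > 0`, `T(λ) = ∑_{i : q_i > λ} log(q_i/λ)` and `T⁻¹` its inverse,
the macroscopic discovery curve `F(t) = ∑ᵢ (q_i - T⁻¹(t))₊` satisfies
`F(t) = q - I(t) q̲_{I(t)} e^{-t/I(t)} - ∑_{i > I(t)} q_i` for some nondecreasing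
active-set-size function `I : (0,∞) → {1,…,K}`, where `q = ∑ q_i` and `q̲_j` is the
geometric mean of `q₁,…,q_j`. -/
theorem stmt_19 (K : ℕ) (hK : 0 < K) (q : Fin K → ℝ) (hq : ∀ i, 0 < q i)
    (hsorted : ∀ i j : Fin K, i ≤ j → q j ≤ q i)
    (T Tinv : ℝ → ℝ)
    (hT : ∀ lam : ℝ, T lam =
      ∑ i ∈ Finset.univ.filter (fun i : Fin K => lam < q i), Real.log (q i / lam))
    (hinv₁ : ∀ lam ∈ Ioo (0 : ℝ) (q ⟨0, hK⟩), Tinv (T lam) = lam)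
    (hinv₂ : ∀ t ∈ Ioi (0 : ℝ), Tinv t ∈ Ioo (0 : ℝ) (q ⟨0, hK⟩) ∧ T (Tinv t) = t) :
    ∃ I : ℝ → ℕ, MonotoneOn I (Ioi 0) ∧
      ∀ t : ℝ, 0 < t → 1 ≤ I t ∧ I t ≤ K ∧
        ∑ i, max (q i - Tinv t) 0 =
          (∑ i, q i)
          - (I t) * Real.exp ((∑ j : Fin K, if (j : ℕ) < I t then Real.log (q j) else 0)
              / (I t)) * Real.exp (-t / I t)
          - ∑ j : Fin K, if I t ≤ (j : ℕ) then q j else 0 :=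
  stmt_19_general K hK q hq hsorted T Tinv hT hinv₂
end
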